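/- arXiv:2012.03812 — 5 statements merged into one kernel-verified Lean document; each statement's English description precedes it below -/
import Mathlib

section
/- The exponential mechanism is ε-differentially private: if a randomized algorithm selects output o_i from a finite set O with probability proportional to exp(ε·v(o_i,D)/(2Δ)), where Δ = max over outputs and neighboring databases of |v(o,D) − v(o,D')|, then for any neighboring databases D ∼ D' and any output o, Pr{output = o | D} ≤ exp(ε) · Pr{output = o | D'}. -/
theorem stmt_5 {D O : Type*} [Fintype D] [Fintype O] [Nonempty O]
    (nbr : D → D → Prop) (hsymm : ∀ d d', nbr d d' → nbr d' d)
    (v : O → D → ℝ) (Δ : ℝ) (hΔ : 0 < Δ)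
    (hsens : ∀ (o : O) (d d' : D), nbr d d' → |v o d - v o d'| ≤ Δ)
    (ε : ℝ) (hε : 0 ≤ ε) (d d' : D) (hnbr : nbr d d') (o : O) :
    Real.exp (ε * v o d / (2 * Δ)) / ∑ o', Real.exp (ε * v o' d / (2 * Δ)) ≤
      Real.exp ε *
        (Real.exp (ε * v o d' / (2 * Δ)) / ∑ o', Real.exp (ε * v o' d' / (2 * Δ))) := by
  have hS : (0:ℝ) < ∑ o', Real.exp (ε * v o' d / (2 * Δ)) :=
    Finset.sum_pos (fun i _ => Real.exp_pos _) Finset.univ_nonempty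
  have hS' : (0:ℝ) < ∑ o', Real.exp (ε * v o' d' / (2 * Δ)) :=
    Finset.sum_pos (fun i _ => Real.exp_pos _) Finset.univ_nonempty
  have key : ∀ (a b : D) (o' : O), nbr a b →
      Real.exp (ε * v o' a / (2 * Δ)) ≤ Real.exp (ε / 2) * Real.exp (ε * v o' b / (2 * Δ)) := by
    intro a b o' hab
    rw [← Real.exp_add, Real.exp_le_exp]
    have h1 : v o' a - v o' b ≤ Δ := (abs_le.mp (hsens o' a b hab)).2
    have : ε * v o' a / (2 * Δ) - ε * v o' b / (2 * Δ) ≤ ε / 2 := by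
      rw [div_sub_div_same, ← mul_sub, div_le_div_iff₀ (by linarith) two_pos]
      nlinarith
    linarith
  have hnum := key d d' o hnbr
  have hden : ∑ o', Real.exp (ε * v o' d' / (2 * Δ)) ≤
      Real.exp (ε / 2) * ∑ o', Real.exp (ε * v o' d / (2 * Δ)) := by
    rw [Finset.mul_sum]
    exact Finset.sum_le_sum fun i _ => key d' d i (hsymm d d' hnbr)
  calc Real.exp (ε * v o d / (2 * Δ)) / ∑ o', Real.exp (ε * v o' d / (2 * Δ))
      ≤ (Real.exp (ε / 2) * Real.exp (ε * v o d' / (2 * Δ))) /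
        ((∑ o', Real.exp (ε * v o' d' / (2 * Δ))) / Real.exp (ε / 2)) := by
        apply div_le_div₀ (by positivity) hnum (by positivity)
        rw [div_le_iff₀ (Real.exp_pos _)]
        linarith [hden]
    _ = Real.exp ε *
        (Real.exp (ε * v o d' / (2 * Δ)) / ∑ o', Real.exp (ε * v o' d' / (2 * Δ))) := by
        rw [div_div_eq_mul_div, mul_right_comm, ← Real.exp_add, add_halves, mul_div_assoc]
end

section
/- Let R be a finite subset of ℝ, f and g probability mass functions on R with f(ρ')·g(ρ) ≥ f(ρ)·g(ρ') for all ρ > ρ' (g dominates f in likelihood ratio). Then the function ε ↦ Σ over (r_1,...,r_n) ∈ R^n of [exp(ε·r_i/2)/Σ_k exp(ε·r_k/2)] · (Π_{k≠i} f(r_k)) · g(r_i) is monotonically nondecreasing in ε ≥ 0. -/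
/-!
Differentiate in `ε`. The derivative of the softmax weight of coordinate `i` is
`∑ j, e_i e_j (r_i - r_j) / S²`, and for each `j` the configurations `t` and `t ∘ swap i j` carry
the same denominator `S` and exchange `e_i` and `e_j`. Summing the two contributions leaves
`e_i e_j / S² · (r_i - r_j) (W t - W (t ∘ swap i j))`, which is nonnegative for the weight
`W t = ∏_{k ≠ i} f(t_k) · g(t_i)` precisely by the likelihood-ratio ordering of `f` and `g`.
-/

open Real Finset

theorem Finset.sum_nonneg_of_involutive {X : Type*} [Fintype X] {a : X → ℝ} {σ : X → X}
    (hσ : Function.Involutive σ) (h : ∀ x, 0 ≤ a x + a (σ x)) : 0 ≤ ∑ x, a x := by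
  have hcomp : ∑ x, a (σ x) = ∑ x, a x := Equiv.sum_comp (hσ.toPerm σ) a
  have hpair : 0 ≤ ∑ x, (a x + a (σ x)) := sum_nonneg fun x _ => h x
  rw [sum_add_distrib, hcomp] at hpair
  linarith

theorem hasDerivAt_exp_mul_div_sum_exp_mul {ι : Type*} [Fintype ι] (r : ι → ℝ) (i : ι) (ε : ℝ) :
    HasDerivAt (fun ε => exp (ε * r i) / ∑ k, exp (ε * r k))
      ((∑ j, exp (ε * r i) * exp (ε * r j) * (r i - r j)) / (∑ k, exp (ε * r k)) ^ 2) ε := by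
  have hexp (a : ℝ) : HasDerivAt (fun ε => exp (ε * a)) (exp (ε * a) * a) ε := by
    simpa using ((hasDerivAt_id ε).mul_const a).exp
  have hS : 0 < ∑ k, exp (ε * r k) := sum_pos (fun k _ => exp_pos _) ⟨i, mem_univ i⟩
  have hnum : exp (ε * r i) * r i * ∑ k, exp (ε * r k) - exp (ε * r i) * ∑ k, exp (ε * r k) * r k
      = ∑ j, exp (ε * r i) * exp (ε * r j) * (r i - r j) := by
    rw [mul_sum, mul_sum, ← sum_sub_distrib]
    exact sum_congr rfl fun j _ => by ring
  simpa only [hnum] using (hexp (r i)).fun_div (HasDerivAt.fun_sum fun k _ => hexp (r k)) hS.ne'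

theorem monotone_sum_exp_mul_div_sum_exp_mul_mul {ι α : Type*} [Fintype ι] [DecidableEq ι]
    [Fintype α] (v : α → ℝ) (W : (ι → α) → ℝ) (i : ι)
    (hW : ∀ t j, 0 ≤ (v (t i) - v (t j)) * (W t - W (t ∘ Equiv.swap i j))) :
    Monotone fun ε => ∑ t : ι → α, exp (ε * v (t i)) / (∑ k, exp (ε * v (t k))) * W t := by
  have hderiv (ε : ℝ) := HasDerivAt.fun_sum (u := univ) fun t _ =>
    (hasDerivAt_exp_mul_div_sum_exp_mul (fun k => v (t k)) i ε).mul_const (W t)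
  refine monotone_of_deriv_nonneg (fun ε => (hderiv ε).differentiableAt) fun ε => ?_
  rw [(hderiv ε).deriv]
  simp only [sum_div, sum_mul]
  rw [sum_comm]
  refine sum_nonneg fun j _ => sum_nonneg_of_involutive (σ := (· ∘ Equiv.swap i j))
    (fun t => by ext; simp) fun t => ?_
  have hS : ∑ k, exp (ε * v (t (Equiv.swap i j k))) = ∑ k, exp (ε * v (t k)) :=
    Equiv.sum_comp (Equiv.swap i j) fun k => exp (ε * v (t k))
  simp only [Function.comp_apply, Equiv.swap_apply_left, Equiv.swap_apply_right, hS]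
  have hweight : 0 ≤ exp (ε * v (t i)) * exp (ε * v (t j)) / (∑ k, exp (ε * v (t k))) ^ 2 := by
    positivity
  exact (mul_nonneg hweight (hW t j)).trans_eq (by ring)

theorem sub_mul_sub_nonneg_of_likelihoodRatio {R : Finset ℝ} {f g : ℝ → ℝ}
    (hmlr : ∀ ρ ∈ R, ∀ ρ' ∈ R, ρ' < ρ → f ρ * g ρ' ≤ f ρ' * g ρ) {a b : ℝ} (ha : a ∈ R)
    (hb : b ∈ R) : 0 ≤ (a - b) * (f b * g a - f a * g b) := by
  rcases lt_trichotomy a b with hab | rfl | hab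
  · exact mul_nonneg_of_nonpos_of_nonpos (by linarith) (by linarith [hmlr b hb a ha hab])
  · simp
  · exact mul_nonneg (by linarith) (by linarith [hmlr a ha b hb hab])

theorem sub_mul_sub_prod_erase_swap_nonneg {R : Finset ℝ} {f g : ℝ → ℝ}
    (hf0 : ∀ ρ ∈ R, 0 ≤ f ρ) (hmlr : ∀ ρ ∈ R, ∀ ρ' ∈ R, ρ' < ρ → f ρ * g ρ' ≤ f ρ' * g ρ)
    {ι : Type*} [Fintype ι] [DecidableEq ι] (t : ι → R) (i j : ι) :
    0 ≤ ((t i : ℝ) - t j) * ((∏ k ∈ univ.erase i, f (t k)) * g (t i) -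
      (∏ k ∈ univ.erase i, f (t (Equiv.swap i j k))) * g (t (Equiv.swap i j i))) := by
  rcases eq_or_ne j i with rfl | hji
  · simp
  have hj : j ∈ univ.erase i := mem_erase.2 ⟨hji, mem_univ j⟩
  set P := ∏ k ∈ (univ.erase i).erase j, f (t k)
  have hP : 0 ≤ P := prod_nonneg fun k _ => hf0 _ (t k).2
  have hprod : ∏ k ∈ univ.erase i, f (t k) = f (t j) * P := (mul_prod_erase _ _ hj).symm
  have hprod_swap : ∏ k ∈ univ.erase i, f (t (Equiv.swap i j k)) = f (t i) * P := by
    rw [← mul_prod_erase _ _ hj, Equiv.swap_apply_right]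
    refine congrArg _ (prod_congr rfl fun k hk => ?_)
    obtain ⟨hkj, hki⟩ : k ≠ j ∧ k ≠ i := by simp_all
    rw [Equiv.swap_apply_of_ne_of_ne hki hkj]
  rw [hprod, hprod_swap, Equiv.swap_apply_left]
  exact (mul_nonneg hP (sub_mul_sub_nonneg_of_likelihoodRatio hmlr (t i).2 (t j).2)).trans_eq
    (by ring)

theorem stmt_9_general (R : Finset ℝ) (f g : ℝ → ℝ)
    (hf0 : ∀ ρ ∈ R, 0 ≤ f ρ)
    (hmlr : ∀ ρ ∈ R, ∀ ρ' ∈ R, ρ' < ρ → f ρ * g ρ' ≤ f ρ' * g ρ)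
    (n : ℕ) (i : Fin n) :
    MonotoneOn (fun ε : ℝ =>
        ∑ t : Fin n → {x // x ∈ R},
          (Real.exp (ε * (t i : ℝ) / 2) / ∑ k, Real.exp (ε * (t k : ℝ) / 2)) *
            (∏ k ∈ Finset.univ.erase i, f (t k)) * g (t i))
      (Set.Ici (0 : ℝ)) := by
  have hmono := monotone_sum_exp_mul_div_sum_exp_mul_mul (Subtype.val : R → ℝ)
    (fun t => (∏ k ∈ univ.erase i, f (t k)) * g (t i)) i
    (fun t => sub_mul_sub_prod_erase_swap_nonneg hf0 hmlr t i)
  have hhalf : Monotone fun ε : ℝ => ε / 2 := fun _ _ h => div_le_div_of_nonneg_right h two_pos.le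
  convert ((hmono.comp hhalf).monotoneOn (Set.Ici 0)) using 1
  funext ε
  simp only [Function.comp_apply, mul_assoc, div_mul_eq_mul_div]

theorem stmt_9 (R : Finset ℝ) (f g : ℝ → ℝ)
    (hf0 : ∀ ρ ∈ R, 0 ≤ f ρ) (hg0 : ∀ ρ ∈ R, 0 ≤ g ρ)
    (hfs : ∑ ρ ∈ R, f ρ = 1) (hgs : ∑ ρ ∈ R, g ρ = 1)
    (hmlr : ∀ ρ ∈ R, ∀ ρ' ∈ R, ρ' < ρ → f ρ * g ρ' ≤ f ρ' * g ρ)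
    (n : ℕ) (hn : 0 < n) (i : Fin n) :
    MonotoneOn (fun ε : ℝ =>
        ∑ t : Fin n → {x // x ∈ R},
          (Real.exp (ε * (t i : ℝ) / 2) / ∑ k, Real.exp (ε * (t k : ℝ) / 2)) *
            (∏ k ∈ Finset.univ.erase i, f (t k)) * g (t i))
      (Set.Ici (0 : ℝ)) :=
  stmt_9_general R f g hf0 hmlr n i
end

section
/- Strict monotonicity of the fairness gap under shifted-likelihood conditions (pairing inequality): let f, f⁰, f¹ be functions on a finite R ⊂ ℝ with f strictly decreasing, f⁰ − f¹ strictly increasing, f⁰(ρ) − f¹(ρ) ≥ 0 for all ρ > min R, and f > 0. Then for all t > l in R, (t−l)·f(l)·(f⁰(t) − f¹(t)) + (l−t)·f(t)·(f⁰(l) − f¹(l)) > 0. -/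
theorem stmt_11 (R : Finset ℝ) (hR : R.Nonempty) (f f0 f1 : ℝ → ℝ)
    (hfdec : ∀ ρ ∈ R, ∀ ρ' ∈ R, ρ' < ρ → f ρ < f ρ')
    (hdinc : ∀ ρ ∈ R, ∀ ρ' ∈ R, ρ' < ρ → f0 ρ' - f1 ρ' < f0 ρ - f1 ρ)
    (hnn : ∀ ρ ∈ R, R.min' hR < ρ → 0 ≤ f0 ρ - f1 ρ)
    (hfpos : ∀ ρ ∈ R, 0 < f ρ)
    (t l : ℝ) (ht : t ∈ R) (hl : l ∈ R) (hlt : l < t) :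
    0 < (t - l) * f l * (f0 t - f1 t) + (l - t) * f t * (f0 l - f1 l) := by
  have hdt : 0 ≤ f0 t - f1 t :=
    hnn t ht (lt_of_le_of_lt (R.min'_le l hl) hlt)
  have hdlt : f0 l - f1 l < f0 t - f1 t := hdinc t ht l hl hlt
  have hfl : 0 < f l := hfpos l hl
  have hft : 0 < f t := hfpos t ht
  have hflt : f t < f l := hfdec t ht l hl hlt
  have key : f t * (f0 l - f1 l) < f l * (f0 t - f1 t) := by
    rcases le_or_gt (f0 l - f1 l) 0 with h | h
    · nlinarith
    · nlinarith
  nlinarith [mul_pos (sub_pos.mpr hlt) (sub_pos.mpr key)]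
end

section
/- The derivative of the fairness gap at ε = 0 equals ((n−1)/(2n²))·(μ⁰ − μ¹), where μ^a = Σ_ρ ρ·f^a(ρ) is the conditional mean score of group a. -/
/-!
At `ε = 0` every softmax weight equals `1/n`, and the quotient rule gives
`(n t_i - ∑_k t_k)/(2n²)` as the derivative of the `i`-th weight. Split
`∑_k t_k = t_i + ∑_{k ≠ i} t_k`. Under the weight `∏_{k ≠ i} f(t_k)` the sum over profiles `t`
factors into a sum over `t_i` times a sum over the other coordinates. Since `f⁰ - f¹` has total
mass zero, the `∑_{k ≠ i} t_k` part vanishes, while the `t_i` part contributes `(n - 1)(μ⁰ - μ¹)`.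
-/

open Real Finset

section

variable {ι S R : Type*} [Fintype ι] [DecidableEq ι] [Fintype S] [CommSemiring R]

theorem Fintype.sum_apply_mul_restrict_ne (i : ι) (g : S → R) (H : ({j // j ≠ i} → S) → R) :
    ∑ t : ι → S, g (t i) * H (fun j => t j) = (∑ s, g s) * ∑ r, H r := by
  rw [← (Equiv.funSplitAt i S).symm.sum_comp, Fintype.sum_prod_type, sum_mul]
  simp [mul_sum, show ∀ j : {j // j ≠ i}, (j : ι) ≠ i from fun j => j.2]

theorem Fintype.sum_apply_mul_prod_erase (i : ι) (g f : S → R) :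
    ∑ t : ι → S, g (t i) * ∏ k ∈ univ.erase i, f (t k) =
      (∑ s, g s) * (∑ s, f s) ^ (Fintype.card ι - 1) := by
  simp_rw [prod_subtype (univ.erase i) (p := (· ≠ i)) (by simp)]
  rw [sum_apply_mul_restrict_ne i g fun r => ∏ j, f (r j), ← Fintype.prod_sum]
  simp

end

theorem hasDerivAt_exp_mul_div_sum_exp {ι : Type*} [Fintype ι] (a : ι → ℝ) (i : ι) :
    HasDerivAt (fun ε => exp (ε * a i) / ∑ k, exp (ε * a k))
      ((Fintype.card ι * a i - ∑ k, a k) / Fintype.card ι ^ 2) 0 := by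
  have : Nonempty ι := ⟨i⟩
  have hexp : ∀ k, HasDerivAt (fun ε => exp (ε * a k)) (a k) 0 := fun k => by
    simpa using ((hasDerivAt_id (0 : ℝ)).mul_const (a k)).exp
  have hsum : HasDerivAt (fun ε => ∑ k, exp (ε * a k)) (∑ k, a k) 0 :=
    HasDerivAt.fun_sum fun k _ => hexp k
  refine ((hexp i).div hsum (by simp)).congr_deriv ?_
  simp only [zero_mul, exp_zero, sum_const, card_univ, nsmul_eq_mul, mul_one, one_mul]
  ring

theorem stmt_14_general (R : Finset ℝ) (f f0 f1 : ℝ → ℝ)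
    (hfs : ∑ ρ ∈ R, f ρ = 1)
    (hs0 : ∑ ρ ∈ R, f0 ρ = 1) (hs1 : ∑ ρ ∈ R, f1 ρ = 1)
    (n : ℕ) (i : Fin n) :
    HasDerivAt (fun ε : ℝ =>
        ∑ t : Fin n → {x // x ∈ R},
          (Real.exp (ε * (t i : ℝ) / 2) / ∑ k, Real.exp (ε * (t k : ℝ) / 2)) *
            (∏ k ∈ Finset.univ.erase i, f (t k)) * (f0 (t i) - f1 (t i)))
      ((((n : ℝ) - 1) / (2 * (n : ℝ) ^ 2)) *
        ((∑ ρ ∈ R, ρ * f0 ρ) - ∑ ρ ∈ R, ρ * f1 ρ)) 0 := by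
  have hn : (n : ℝ) ≠ 0 := Nat.cast_ne_zero.mpr i.pos.ne'
  set P : (Fin n → R) → ℝ := fun t => ∏ k ∈ univ.erase i, f (t k)
  set d : ℝ → ℝ := fun ρ => f0 ρ - f1 ρ
  have hterm (t : Fin n → R) :=
    ((hasDerivAt_exp_mul_div_sum_exp (fun k => (t k : ℝ) / 2) i).mul_const (P t)).mul_const
      (d (t i))
  simp only [Fintype.card_fin, ← mul_div_assoc] at hterm
  refine (HasDerivAt.fun_sum fun t _ => hterm t).congr_deriv ?_
  have hmean : ∑ t : Fin n → R, ((t i : ℝ) * d (t i)) * P t =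
      (∑ ρ ∈ R, ρ * f0 ρ) - ∑ ρ ∈ R, ρ * f1 ρ := by
    simp only [P]
    rw [Fintype.sum_apply_mul_prod_erase i (fun s : R => (s : ℝ) * d s) fun s : R => f s,
      sum_coe_sort R f, hfs, one_pow, mul_one, sum_coe_sort R fun ρ => ρ * d ρ]
    simp only [d, mul_sub, sum_sub_distrib]
  have hcentred : ∑ t : Fin n → R, d (t i) * ((∑ k ∈ univ.erase i, (t k : ℝ)) * P t) = 0 := by
    simp_rw [P, prod_subtype (univ.erase i) (p := fun j : Fin n => j ≠ i) (by simp),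
      sum_subtype (univ.erase i) (p := fun j : Fin n => j ≠ i) (by simp)]
    rw [Fintype.sum_apply_mul_restrict_ne i (fun s : R => d s)
      fun r => (∑ j, (r j : ℝ)) * ∏ j, f (r j), sum_coe_sort R d]
    simp [d, sum_sub_distrib, hs0, hs1]
  calc _ = ∑ t : Fin n → R, (((n : ℝ) - 1) / (2 * n ^ 2) * (((t i : ℝ) * d (t i)) * P t)
        - 1 / (2 * n ^ 2) * (d (t i) * ((∑ k ∈ univ.erase i, (t k : ℝ)) * P t))) := by
        refine sum_congr rfl fun t _ => ?_
        rw [← add_sum_erase _ _ (mem_univ i), ← sum_div]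
        field_simp
        ring
    _ = _ := by rw [sum_sub_distrib, ← mul_sum, ← mul_sum, hmean, hcentred, mul_zero, sub_zero]

theorem stmt_14 (R : Finset ℝ) (f f0 f1 : ℝ → ℝ)
    (hf0 : ∀ ρ ∈ R, 0 ≤ f ρ) (hfs : ∑ ρ ∈ R, f ρ = 1)
    (hs0 : ∑ ρ ∈ R, f0 ρ = 1) (hs1 : ∑ ρ ∈ R, f1 ρ = 1)
    (n : ℕ) (hn : 2 ≤ n) (i : Fin n) :
    HasDerivAt (fun ε : ℝ =>
        ∑ t : Fin n → {x // x ∈ R},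
          (Real.exp (ε * (t i : ℝ) / 2) / ∑ k, Real.exp (ε * (t k : ℝ) / 2)) *
            (∏ k ∈ Finset.univ.erase i, f (t k)) * (f0 (t i) - f1 (t i)))
      ((((n : ℝ) - 1) / (2 * (n : ℝ) ^ 2)) *
        ((∑ ρ ∈ R, ρ * f0 ρ) - ∑ ρ ∈ R, ρ * f1 ρ)) 0 :=
  stmt_14_general R f f0 f1 hfs hs0 hs1 n i
end

section
/- If an increasing continuous accuracy function θ and continuous fairness function γ with γ(0)=0 satisfy |γ(ε_max)| > γ_max > 0, then the maximum of θ(ε) over {ε ∈ [0, ε_max] : |γ(ε)| ≤ γ_max} is attained at ε* = max{ε ≤ ε_max : |γ(ε)| = γ_max}, and this set is nonempty. -/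
theorem stmt_18 (εmax γmax : ℝ) (hεmax : 0 < εmax) (hγmax : 0 < γmax)
    (θ γ : ℝ → ℝ)
    (hθc : ContinuousOn θ (Set.Icc 0 εmax)) (hθm : MonotoneOn θ (Set.Icc 0 εmax))
    (hγc : ContinuousOn γ (Set.Icc 0 εmax)) (hγ0 : γ 0 = 0)
    (hviol : γmax < |γ εmax|) :
    ∃ εstar ∈ Set.Icc (0 : ℝ) εmax,
      |γ εstar| = γmax ∧
      (∀ ε ∈ Set.Icc (0 : ℝ) εmax, |γ ε| = γmax → ε ≤ εstar) ∧
      (∀ ε ∈ Set.Icc (0 : ℝ) εmax, |γ ε| ≤ γmax → θ ε ≤ θ εstar) := by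
  set f : ℝ → ℝ := fun x => |γ x| with hf
  have hfc : ContinuousOn f (Set.Icc 0 εmax) := hγc.abs
  set S : Set ℝ := {x | x ∈ Set.Icc 0 εmax ∧ f x = γmax} with hS
  -- S is nonempty via IVT
  have hne : S.Nonempty := by
    have h0 : f 0 = 0 := by simp [hf, hγ0]
    have := intermediate_value_Icc (le_of_lt hεmax) hfc
    have hmem : γmax ∈ Set.Icc (f 0) (f εmax) := by
      rw [h0]; exact ⟨le_of_lt hγmax, le_of_lt hviol⟩
    obtain ⟨x, hx, hfx⟩ := this hmem
    exact ⟨x, hx, hfx⟩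
  -- S is compact
  have hScl : IsClosed S := by
    have : S = Set.Icc 0 εmax ∩ f ⁻¹' {γmax} := by
      ext x; constructor
      · rintro ⟨h1, h2⟩; exact ⟨h1, h2⟩
      · rintro ⟨h1, h2⟩; exact ⟨h1, h2⟩
    rw [this]
    exact hfc.preimage_isClosed_of_isClosed isClosed_Icc isClosed_singleton
  have hScomp : IsCompact S := (isCompact_Icc).of_isClosed_subset hScl (fun x hx => hx.1)
  obtain ⟨εstar, hεS, hgreat⟩ := hScomp.exists_isGreatest hne
  refine ⟨εstar, hεS.1, hεS.2, fun ε hε hεeq => hgreat ⟨hε, hεeq⟩, ?_⟩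
  intro ε hε hle
  have hεle : ε ≤ εstar := by
    by_contra h
    push_neg at h
    -- IVT on [ε, εmax]
    have hsub : Set.Icc ε εmax ⊆ Set.Icc 0 εmax := Set.Icc_subset_Icc hε.1 le_rfl
    have hfc' : ContinuousOn f (Set.Icc ε εmax) := hfc.mono hsub
    have hmem : γmax ∈ Set.Icc (f ε) (f εmax) := ⟨hle, le_of_lt hviol⟩
    obtain ⟨x, hx, hfx⟩ := intermediate_value_Icc hε.2 hfc' hmem
    have : x ≤ εstar := hgreat ⟨hsub hx, hfx⟩
    linarith [hx.1]
  exact hθm hε hεS.1 hεle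
end
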